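/- Let G : S ⥤ V and G' : S' ⥤ V be functors each admitting an asymmetric lens structure (so each is the Get of an asymmetric lens, forming a cospan of asymmetric lenses). Let a commutative square in Cat with top-left vertex T and functors H : T ⥤ S, H' : T ⥤ S' over the cospan (G, G') be a pullback square (in the sense of CategoryTheory.IsPullback in Cat). Then the diagonal functor H ⋙ G : T ⥤ V admits an asymmetric lens structure: there exist a category Λ, a discrete opfibration F : Λ ⥤ V and a bijective-on-objects functor P : Λ ⥤ T with P ⋙ (H ⋙ G) = F. This is the consistency lens: the fusion of the two 1-lenses G and G' is again a 1-lens. -/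

import Mathlib

/-!
The two lenses provide discrete opfibrations `F = P ⋙ G` and `F' = P' ⋙ G'`. Their strict pullback
`Λ''`, whose objects are the pairs `(a, a')` with `F a = F' a'`, maps to `T` by the universal
property of the pullback square. This Put is bijective on objects because `P`, `P'` are and an
object of a pullback in `Cat` is determined by its two projections. Its Get
`π₁ ⋙ F` is a discrete opfibration, since discrete opfibrations, i.e. the functors inducing a
bijection on the arrows out of each object, are stable under pullback and under composition.
-/

open CategoryTheory

/-- A functor `F : C ⥤ D` is a discrete opfibration if for every object `c` of `C` and
every morphism `g : F.obj c ⟶ d` in `D`, there is a unique pair of an object `c'` and a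
morphism `f : c ⟶ c'` with `F.obj c' = d` and `F.map f ≫ eqToHom _ = g`. -/
def IsDiscreteOpfib {C : Type*} [Category C] {D : Type*} [Category D] (F : C ⥤ D) : Prop :=
  ∀ (c : C) ⦃d : D⦄ (g : F.obj c ⟶ d),
    ∃! p : (c' : C) × (c ⟶ c'), ∃ h : F.obj p.1 = d, F.map p.2 ≫ eqToHom h = g

/-- An asymmetric lens structure on a functor `G : S ⥤ V` (in `Cat`): a category `Λ`,
a discrete opfibration `F : Λ ⥤ V` and a bijective-on-objects functor `P : Λ ⥤ S`
(the Put) such that `P ⋙ G = F`. -/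
def HasLensStructure {S V : Cat} (G : S ⟶ V) : Prop :=
  ∃ (Λ : Cat) (F : Λ ⟶ V) (P : Λ ⟶ S),
    IsDiscreteOpfib F.toFunctor ∧ Function.Bijective P.toFunctor.obj ∧ P ≫ G = F

section Costar

variable {C : Type*} [Category C] {D : Type*} [Category D] {E : Type*} [Category E]

theorem sigma_hom_mk_eq_iff {c d₁ d₂ : C} (f₁ : c ⟶ d₁) (f₂ : c ⟶ d₂) :
    (⟨d₁, f₁⟩ : Σ d, c ⟶ d) = ⟨d₂, f₂⟩ ↔ ∃ h : d₁ = d₂, f₁ ≫ eqToHom h = f₂ := by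
  constructor
  · rintro ⟨⟩
    exact ⟨rfl, by simp⟩
  · rintro ⟨rfl, rfl⟩
    simp

/-- The action of `F` on the costar of `c`, i.e. on the arrows out of `c`. -/
def CategoryTheory.Functor.mapCostar (F : C ⥤ D) (c : C) : (Σ c', c ⟶ c') → Σ d, F.obj c ⟶ d :=
  fun p => ⟨F.obj p.1, F.map p.2⟩

theorem isDiscreteOpfib_iff_bijective_mapCostar (F : C ⥤ D) :
    IsDiscreteOpfib F ↔ ∀ c, Function.Bijective (F.mapCostar c) := by
  simp only [Function.bijective_iff_existsUnique, Sigma.forall, Functor.mapCostar,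
    sigma_hom_mk_eq_iff]
  rfl

theorem IsDiscreteOpfib.comp {F : C ⥤ D} {K : D ⥤ E} (hF : IsDiscreteOpfib F)
    (hK : IsDiscreteOpfib K) : IsDiscreteOpfib (F ⋙ K) := by
  rw [isDiscreteOpfib_iff_bijective_mapCostar] at *
  exact fun c => (hK (F.obj c)).comp (hF c)

end Costar

section StrictPullback

variable {A : Type*} [Category A] {B : Type*} [Category B] {C : Type*} [Category C]

@[ext]
structure StrictPullback (F : A ⥤ C) (F' : B ⥤ C) where
  fst : A
  snd : B
  w : F.obj fst = F'.obj snd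

namespace StrictPullback

variable {F : A ⥤ C} {F' : B ⥤ C}

@[ext]
structure Hom (x y : StrictPullback F F') where
  fst : x.fst ⟶ y.fst
  snd : x.snd ⟶ y.snd
  w : F.map fst ≫ eqToHom y.w = eqToHom x.w ≫ F'.map snd

instance : Category (StrictPullback F F') where
  Hom := Hom
  id x := ⟨𝟙 _, 𝟙 _, by simp⟩
  comp p q := ⟨p.fst ≫ q.fst, p.snd ≫ q.snd, by
    rw [F.map_comp, Category.assoc, q.w, reassoc_of% p.w, F'.map_comp]⟩

variable (F F')

def π₁ : StrictPullback F F' ⥤ A where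
  obj x := x.fst
  map p := p.fst

def π₂ : StrictPullback F F' ⥤ B where
  obj x := x.snd
  map p := p.snd

theorem π₁_comp_eq_π₂_comp : π₁ F F' ⋙ F = π₂ F F' ⋙ F' :=
  CategoryTheory.Functor.ext StrictPullback.w fun x y p => by
    have h := p.w =≫ eqToHom y.w.symm
    simp only [Category.assoc, eqToHom_trans, eqToHom_refl, Category.comp_id] at h
    exact h

variable {F F'} {x : StrictPullback F F'}

theorem sigma_ext {p q : Σ y, x ⟶ y}
    (h₁ : (⟨p.1.fst, p.2.fst⟩ : Σ a, x.fst ⟶ a) = ⟨q.1.fst, q.2.fst⟩)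
    (h₂ : (⟨p.1.snd, p.2.snd⟩ : Σ b, x.snd ⟶ b) = ⟨q.1.snd, q.2.snd⟩) : p = q := by
  obtain ⟨⟨a, b, w⟩, k⟩ := p
  obtain ⟨⟨a', b', w'⟩, k'⟩ := q
  obtain ⟨rfl, hfst⟩ := Sigma.mk.inj_iff.mp h₁
  obtain ⟨rfl, hsnd⟩ := Sigma.mk.inj_iff.mp h₂
  obtain rfl : k = k' := Hom.ext (eq_of_heq hfst) (eq_of_heq hsnd)
  rfl

theorem mapCostar_snd (p : Σ y, x ⟶ y) :
    F'.mapCostar x.snd ⟨p.1.snd, p.2.snd⟩ = ⟨F.obj p.1.fst, eqToHom x.w.symm ≫ F.map p.2.fst⟩ := by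
  rw [Functor.mapCostar, sigma_hom_mk_eq_iff]
  exact ⟨p.1.w.symm, by simpa using (eqToHom x.w.symm ≫= p.2.w =≫ eqToHom p.1.w.symm).symm⟩

end StrictPullback

theorem IsDiscreteOpfib.strictPullback_π₁ {A : Type*} [Category A] {B : Type*} [Category B]
    {C : Type*} [Category C] (F : A ⥤ C) {F' : B ⥤ C} (hF' : IsDiscreteOpfib F') :
    IsDiscreteOpfib (StrictPullback.π₁ F F') := by
  rw [isDiscreteOpfib_iff_bijective_mapCostar] at hF' ⊢
  intro x
  constructor
  · intro p q hpq
    refine StrictPullback.sigma_ext hpq ((hF' x.snd).1 ?_)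
    rw [StrictPullback.mapCostar_snd, StrictPullback.mapCostar_snd]
    exact congrArg (fun s : Σ a, x.fst ⟶ a => (⟨F.obj s.1, eqToHom x.w.symm ≫ F.map s.2⟩ :
      Σ c, F'.obj x.snd ⟶ c)) hpq
  · rintro ⟨a, f⟩
    obtain ⟨⟨b, f'⟩, hf'⟩ := (hF' x.snd).2 ⟨F.obj a, eqToHom x.w.symm ≫ F.map f⟩
    obtain ⟨hb, hf'⟩ := (sigma_hom_mk_eq_iff _ _).mp hf'
    refine ⟨⟨⟨a, b, hb.symm⟩, ⟨f, f', ?_⟩⟩, rfl⟩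
    simpa using (eqToHom x.w ≫= hf' =≫ eqToHom hb.symm).symm

end StrictPullback

universe v u

namespace CategoryTheory.Cat

variable {T S S' V : Cat.{v, u}}

theorem const_comp_eq_const_comp {X : Cat.{v, u}} {F : S ⟶ V} {F' : S' ⟶ V} {s : S} {s' : S'}
    (h : F.toFunctor.obj s = F'.toFunctor.obj s') :
    ((Functor.const X).obj s).toCatHom ≫ F = ((Functor.const X).obj s').toCatHom ≫ F' :=
  Hom.ext (show (Functor.const X).obj s ⋙ F.toFunctor = (Functor.const X).obj s' ⋙ F'.toFunctor from
    Functor.ext (fun _ => h) (fun _ _ _ => by simp))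

variable {G : S ⟶ V} {G' : S' ⟶ V} {H : T ⟶ S} {H' : T ⟶ S'}

-- Objects of `T` are detected by constant functors, to which the universal property applies.
theorem obj_ext_of_isPullback (hpb : IsPullback H H' G G') {t₁ t₂ : T}
    (h : H.toFunctor.obj t₁ = H.toFunctor.obj t₂) (h' : H'.toFunctor.obj t₁ = H'.toFunctor.obj t₂) :
    t₁ = t₂ :=
  Functor.congr_obj (congrArg Hom.toFunctor
    (hpb.hom_ext (const_comp_eq_const_comp (X := T) h) (const_comp_eq_const_comp h'))) t₁

variable {A B : Cat.{v, u}} {P : A ⟶ S} {P' : B ⟶ S'}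

theorem bijective_obj_of_isPullback (hpb : IsPullback H H' G G')
    (hP : Function.Bijective P.toFunctor.obj) (hP' : Function.Bijective P'.toFunctor.obj)
    (L : Cat.of (StrictPullback (P ≫ G).toFunctor (P' ≫ G').toFunctor) ⟶ T)
    (hL : ∀ x, H.toFunctor.obj (L.toFunctor.obj x) = P.toFunctor.obj x.fst)
    (hL' : ∀ x, H'.toFunctor.obj (L.toFunctor.obj x) = P'.toFunctor.obj x.snd) :
    Function.Bijective L.toFunctor.obj := by
  refine ⟨fun x y hxy => ?_, fun t => ?_⟩
  · exact StrictPullback.ext (hP.1 (by rw [← hL, ← hL, hxy])) (hP'.1 (by rw [← hL', ← hL', hxy]))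
  · obtain ⟨a, ha⟩ := hP.2 (H.toFunctor.obj t)
    obtain ⟨b, hb⟩ := hP'.2 (H'.toFunctor.obj t)
    have w : (P ≫ G).toFunctor.obj a = (P' ≫ G').toFunctor.obj b := by
      simpa [Hom.comp_obj, ha, hb] using Functor.congr_obj (congrArg Hom.toFunctor hpb.w) t
    exact ⟨⟨a, b, w⟩, obj_ext_of_isPullback hpb ((hL _).trans ha) ((hL' _).trans hb)⟩

end CategoryTheory.Cat

/-- The consistency lens: fusing two 1-lenses with common codomain, i.e. the diagonal of
the pullback of their Gets, is again a 1-lens. -/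
theorem consistency_lens {T S S' V : Cat}
    (G : S ⟶ V) (G' : S' ⟶ V) (H : T ⟶ S) (H' : T ⟶ S')
    (hG : HasLensStructure G) (hG' : HasLensStructure G')
    (hpb : IsPullback H H' G G') :
    HasLensStructure (H ≫ G) := by
  obtain ⟨Λ, _, P, hF, hP, rfl⟩ := hG
  obtain ⟨Λ', _, P', hF', hP', rfl⟩ := hG'
  let π₁ := (StrictPullback.π₁ (P ≫ G).toFunctor (P' ≫ G').toFunctor).toCatHom
  let π₂ := (StrictPullback.π₂ (P ≫ G).toFunctor (P' ≫ G').toFunctor).toCatHom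
  have w : (π₁ ≫ P) ≫ G = (π₂ ≫ P') ≫ G' := Cat.Hom.ext (StrictPullback.π₁_comp_eq_π₂_comp _ _)
  have hL := hpb.lift_fst _ _ w
  have hL' := hpb.lift_snd _ _ w
  refine ⟨_, _, hpb.lift _ _ w, ?_, Cat.bijective_obj_of_isPullback hpb hP hP' _
    (Functor.congr_obj (congrArg Cat.Hom.toFunctor hL))
    (Functor.congr_obj (congrArg Cat.Hom.toFunctor hL')), rfl⟩
  rw [← Category.assoc, hL]
  exact (hF'.strictPullback_π₁ _).comp hF
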